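/- arXiv:2404.15861 — 2 statements merged into one kernel-verified Lean document; each statement's English description precedes it below -/
import Mathlib

section
/- For any state ψ and self-adjoint involutions A₀, A₁ on one tensor factor and B₀, B₁ on the other, the CHSH expression ⟨A₀⊗B₀⟩ + ⟨A₀⊗B₁⟩ + ⟨A₁⊗B₀⟩ − ⟨A₁⊗B₁⟩ evaluated on ψ is at most 2√2. -/
/-!
Embed the observables as `Aᵢ ⊗ 1` and `1 ⊗ Bⱼ`: they are self-adjoint involutions and the `Aᵢ ⊗ 1`
commute with the `1 ⊗ Bⱼ`, so Mathlib's sum-of-squares proof of Tsirelson's inequality in ordered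
⋆-algebras gives `A₀ ⊗ B₀ + A₀ ⊗ B₁ + A₁ ⊗ B₀ - A₁ ⊗ B₁ ≤ 2√2 • 1` in the Loewner order on matrices.
Testing this operator inequality against the unit vector `ψ` bounds the expectation value.
-/

open Matrix Kronecker

/-- Expectation value ⟨ψ, M ψ⟩ for a matrix observable. -/
noncomputable def expVal {ι : Type*} [Fintype ι] (ψ : ι → ℂ) (M : Matrix ι ι ℂ) : ℂ :=
  star ψ ⬝ᵥ M.mulVec ψ

open scoped MatrixOrder

namespace Matrix

theorem star_kronecker_one {R m n : Type*} [CommSemiring R] [StarRing R] [DecidableEq n]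
    {A : Matrix m m R} (hA : A.IsHermitian) : star (A ⊗ₖ (1 : Matrix n n R)) = A ⊗ₖ 1 := by
  rw [star_eq_conjTranspose, conjTranspose_kronecker, hA.eq, conjTranspose_one]

theorem star_one_kronecker {R m n : Type*} [CommSemiring R] [StarRing R] [DecidableEq m]
    {B : Matrix n n R} (hB : B.IsHermitian) : star ((1 : Matrix m m R) ⊗ₖ B) = 1 ⊗ₖ B := by
  rw [star_eq_conjTranspose, conjTranspose_kronecker, hB.eq, conjTranspose_one]

section Kronecker

variable {R m n : Type*} [CommSemiring R] [Fintype m] [Fintype n] [DecidableEq m] [DecidableEq n]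

theorem kronecker_one_mul_one_kronecker (A : Matrix m m R) (B : Matrix n n R) :
    A ⊗ₖ (1 : Matrix n n R) * (1 : Matrix m m R) ⊗ₖ B = A ⊗ₖ B := by
  rw [← mul_kronecker_mul, Matrix.mul_one, Matrix.one_mul]

theorem one_kronecker_mul_kronecker_one (A : Matrix m m R) (B : Matrix n n R) :
    (1 : Matrix m m R) ⊗ₖ B * A ⊗ₖ (1 : Matrix n n R) = A ⊗ₖ B := by
  rw [← mul_kronecker_mul, Matrix.mul_one, Matrix.one_mul]

theorem sq_kronecker_one_eq_one {A : Matrix m m R} (hA : A * A = 1) :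
    (A ⊗ₖ (1 : Matrix n n R)) ^ 2 = 1 := by
  rw [sq, ← mul_kronecker_mul, hA, Matrix.one_mul, one_kronecker_one]

theorem sq_one_kronecker_eq_one {B : Matrix n n R} (hB : B * B = 1) :
    ((1 : Matrix m m R) ⊗ₖ B) ^ 2 = 1 := by
  rw [sq, ← mul_kronecker_mul, hB, Matrix.one_mul, one_kronecker_one]

theorem isCHSHTuple_kronecker [StarRing R] {A₀ A₁ : Matrix m m R} {B₀ B₁ : Matrix n n R}
    (hA₀ : A₀.IsHermitian) (hA₁ : A₁.IsHermitian) (hB₀ : B₀.IsHermitian) (hB₁ : B₁.IsHermitian)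
    (hA₀i : A₀ * A₀ = 1) (hA₁i : A₁ * A₁ = 1) (hB₀i : B₀ * B₀ = 1) (hB₁i : B₁ * B₁ = 1) :
    IsCHSHTuple (A₀ ⊗ₖ (1 : Matrix n n R)) (A₁ ⊗ₖ 1) ((1 : Matrix m m R) ⊗ₖ B₀) (1 ⊗ₖ B₁) where
  A₀_inv := sq_kronecker_one_eq_one hA₀i
  A₁_inv := sq_kronecker_one_eq_one hA₁i
  B₀_inv := sq_one_kronecker_eq_one hB₀i
  B₁_inv := sq_one_kronecker_eq_one hB₁i
  A₀_sa := star_kronecker_one hA₀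
  A₁_sa := star_kronecker_one hA₁
  B₀_sa := star_one_kronecker hB₀
  B₁_sa := star_one_kronecker hB₁
  A₀B₀_commutes := by rw [kronecker_one_mul_one_kronecker, one_kronecker_mul_kronecker_one]
  A₀B₁_commutes := by rw [kronecker_one_mul_one_kronecker, one_kronecker_mul_kronecker_one]
  A₁B₀_commutes := by rw [kronecker_one_mul_one_kronecker, one_kronecker_mul_kronecker_one]
  A₁B₁_commutes := by rw [kronecker_one_mul_one_kronecker, one_kronecker_mul_kronecker_one]

end Kronecker

end Matrix

section ExpVal

variable {ι : Type*} [Fintype ι]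

theorem expVal_add (ψ : ι → ℂ) (M N : Matrix ι ι ℂ) :
    expVal ψ (M + N) = expVal ψ M + expVal ψ N := by
  rw [expVal, add_mulVec, dotProduct_add, expVal, expVal]

theorem expVal_sub (ψ : ι → ℂ) (M N : Matrix ι ι ℂ) :
    expVal ψ (M - N) = expVal ψ M - expVal ψ N := by
  rw [expVal, sub_mulVec, dotProduct_sub, expVal, expVal]

theorem re_expVal_le_of_le_smul_one [DecidableEq ι] {ψ : ι → ℂ} (hψ : star ψ ⬝ᵥ ψ = 1)
    {M : Matrix ι ι ℂ} {c : ℝ} (hM : M ≤ c • 1) : (expVal ψ M).re ≤ c := by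
  have h := (Matrix.le_iff.mp hM).re_dotProduct_nonneg ψ
  rw [sub_mulVec, dotProduct_sub, smul_mulVec, one_mulVec, dotProduct_smul, hψ] at h
  simpa [expVal] using h

end ExpVal

/-- Tsirelson's bound for the CHSH expression. -/
theorem stmt_4 {m n : Type*} [Fintype m] [Fintype n] [DecidableEq m] [DecidableEq n]
    (A₀ A₁ : Matrix m m ℂ) (B₀ B₁ : Matrix n n ℂ)
    (hA₀ : A₀.IsHermitian) (hA₁ : A₁.IsHermitian)
    (hB₀ : B₀.IsHermitian) (hB₁ : B₁.IsHermitian)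
    (hA₀i : A₀ * A₀ = 1) (hA₁i : A₁ * A₁ = 1)
    (hB₀i : B₀ * B₀ = 1) (hB₁i : B₁ * B₁ = 1)
    (ψ : m × n → ℂ) (hψ : star ψ ⬝ᵥ ψ = 1) :
    (expVal ψ (A₀ ⊗ₖ B₀) + expVal ψ (A₀ ⊗ₖ B₁) + expVal ψ (A₁ ⊗ₖ B₀)
      - expVal ψ (A₁ ⊗ₖ B₁)).re ≤ 2 * Real.sqrt 2 := by
  have hT := isCHSHTuple_kronecker hA₀ hA₁ hB₀ hB₁ hA₀i hA₁i hB₀i hB₁i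
  have hbound := re_expVal_le_of_le_smul_one hψ (tsirelson_inequality _ _ _ _ hT)
  simp only [kronecker_one_mul_one_kronecker, expVal_add, expVal_sub] at hbound
  calc _ ≤ √2 ^ 3 := hbound
    _ = 2 * √2 := by rw [pow_succ, Real.sq_sqrt zero_le_two]
end

section
/- Let |C₄⟩ = (|00⟩⊗|φ⁺⟩ + |11⟩⊗|φ⁻⟩)/√2 on (ℂ²)⊗4, where |φ^±⟩ = (|00⟩ ± |11⟩)/√2. With observables A₀ = B₀ = C₀ = D₂ = Z, A₁ = B₁ = C₁ = X, D₀ = (Z+X)/√2, D₁ = (Z−X)/√2 (acting on the respective tensor factors), the value of 2⟨A₀B₀⟩ + 2⟨C₀D₂⟩ + 2⟨A₁B₁D₂⟩ + ⟨C₀D₀⟩ + ⟨C₀D₁⟩ + ⟨B₀C₁D₀⟩ − ⟨B₀C₁D₁⟩ on |C₄⟩ equals 6 + 2√2. -/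
open Matrix

noncomputable section

/-- Pauli Z. -/
def PZ : Matrix (Fin 2) (Fin 2) ℂ := !![1, 0; 0, -1]

/-- Pauli X. -/
def PX : Matrix (Fin 2) (Fin 2) ℂ := !![0, 1; 1, 0]

/-- The 4-qubit cluster state |C₄⟩ = ½(|0000⟩ + |0011⟩ + |1100⟩ − |1111⟩). -/
def C4 : Fin 2 × Fin 2 × Fin 2 × Fin 2 → ℂ := fun x =>
  (1 / 2 : ℂ) *
    (if x = (0, 0, 0, 0) then 1
     else if x = (0, 0, 1, 1) then 1
     else if x = (1, 1, 0, 0) then 1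
     else if x = (1, 1, 1, 1) then -1
     else 0)

/-- Expectation ⟨ψ, (A ⊗ B ⊗ C ⊗ D) ψ⟩ on a 4-qubit state. -/
def expVal4 (ψ : Fin 2 × Fin 2 × Fin 2 × Fin 2 → ℂ)
    (A B C D : Matrix (Fin 2) (Fin 2) ℂ) : ℂ :=
  ∑ i, ∑ j, ∑ k, ∑ l, ∑ i', ∑ j', ∑ k', ∑ l',
    star (ψ (i, j, k, l)) * A i i' * B j j' * C k k' * D l l' * ψ (i', j', k', l')

/-!
The expectation is linear in the observable on D, so the seven terms reduce to six Pauli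
correlators of |C₄⟩. Four of them, ZZ11, 11ZZ, XX1Z and 1ZXX, are stabilizers of |C₄⟩ and have
value 1; the other two, 11ZX and 1ZXZ, anticommute with the stabilizer 11ZZ and have value 0.
The sum is therefore 6 + 4/√2 = 6 + 2√2.
-/

section Linearity

variable (ψ : Fin 2 × Fin 2 × Fin 2 × Fin 2 → ℂ) (A B C D D' : Matrix (Fin 2) (Fin 2) ℂ)

theorem expVal4_add_right :
    expVal4 ψ A B C (D + D') = expVal4 ψ A B C D + expVal4 ψ A B C D' := by
  simp only [expVal4, Matrix.add_apply, mul_add, add_mul, Finset.sum_add_distrib]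

theorem expVal4_sub_right :
    expVal4 ψ A B C (D - D') = expVal4 ψ A B C D - expVal4 ψ A B C D' := by
  simp only [expVal4, Matrix.sub_apply, mul_sub, sub_mul, Finset.sum_sub_distrib]

theorem expVal4_smul_right (c : ℂ) :
    expVal4 ψ A B C (c • D) = c * expVal4 ψ A B C D := by
  simp only [expVal4, Matrix.smul_apply, smul_eq_mul, Finset.mul_sum, mul_left_comm c, mul_assoc]

end Linearity

theorem expVal4_C4_PZ_PZ_one_one : expVal4 C4 PZ PZ 1 1 = 1 := by
  simp only [expVal4, C4, PZ, Fin.sum_univ_two]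
  norm_num [Matrix.one_apply, Prod.ext_iff, Fin.ext_iff]

theorem expVal4_C4_one_one_PZ_PZ : expVal4 C4 1 1 PZ PZ = 1 := by
  simp only [expVal4, C4, PZ, Fin.sum_univ_two]
  norm_num [Matrix.one_apply, Prod.ext_iff, Fin.ext_iff]

theorem expVal4_C4_PX_PX_one_PZ : expVal4 C4 PX PX 1 PZ = 1 := by
  simp only [expVal4, C4, PZ, PX, Fin.sum_univ_two]
  norm_num [Matrix.one_apply, Prod.ext_iff, Fin.ext_iff]

theorem expVal4_C4_one_PZ_PX_PX : expVal4 C4 1 PZ PX PX = 1 := by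
  simp only [expVal4, C4, PZ, PX, Fin.sum_univ_two]
  norm_num [Matrix.one_apply, Prod.ext_iff, Fin.ext_iff]

theorem expVal4_C4_one_one_PZ_PX : expVal4 C4 1 1 PZ PX = 0 := by
  simp only [expVal4, C4, PZ, PX, Fin.sum_univ_two]
  norm_num [Matrix.one_apply, Prod.ext_iff, Fin.ext_iff]

theorem expVal4_C4_one_PZ_PX_PZ : expVal4 C4 1 PZ PX PZ = 0 := by
  simp only [expVal4, C4, PZ, PX, Fin.sum_univ_two]
  norm_num [Matrix.one_apply, Prod.ext_iff, Fin.ext_iff]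

theorem inv_sqrt_two_mul_four : (Real.sqrt 2 : ℂ)⁻¹ * 4 = 2 * Real.sqrt 2 := by
  have hsq : (Real.sqrt 2 : ℂ) * Real.sqrt 2 = 2 := by
    exact_mod_cast Real.mul_self_sqrt zero_le_two
  have hne : (Real.sqrt 2 : ℂ) ≠ 0 := by
    exact_mod_cast (Real.sqrt_pos.2 zero_lt_two).ne'
  field_simp
  linear_combination -2 * hsq

theorem stmt_5 :
    2 * expVal4 C4 PZ PZ 1 1 + 2 * expVal4 C4 1 1 PZ PZ + 2 * expVal4 C4 PX PX 1 PZ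
      + expVal4 C4 1 1 PZ ((Real.sqrt 2 : ℂ)⁻¹ • (PZ + PX))
      + expVal4 C4 1 1 PZ ((Real.sqrt 2 : ℂ)⁻¹ • (PZ - PX))
      + expVal4 C4 1 PZ PX ((Real.sqrt 2 : ℂ)⁻¹ • (PZ + PX))
      - expVal4 C4 1 PZ PX ((Real.sqrt 2 : ℂ)⁻¹ • (PZ - PX))
      = 6 + 2 * (Real.sqrt 2 : ℂ) := by
  simp only [expVal4_smul_right, expVal4_add_right, expVal4_sub_right,
    expVal4_C4_PZ_PZ_one_one, expVal4_C4_one_one_PZ_PZ, expVal4_C4_PX_PX_one_PZ,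
    expVal4_C4_one_PZ_PX_PX, expVal4_C4_one_one_PZ_PX, expVal4_C4_one_PZ_PX_PZ]
  linear_combination inv_sqrt_two_mul_four

end
end
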